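/- Let F be a field of characteristic 2, let m ≥ 3, and let Q be a finite group whose Sylow 2-subgroup is isomorphic to the semi-dihedral group of order 2^{m+1}, namely the group presented with generators x, y and relations x^2 = 1, y^{2^m} = 1, x⁻¹ y x = y^{2^{m-1}-1}. Then for every finite-dimensional F-linear representation M of Q, dim_F H^2(Q, M) ≤ 3 · dim_F M. -/

import Mathlib

/-!
A 2-cocycle `f` of `G` with values in `A` defines an extension `E_f` of `G` by `A`. If a subgroup
`P` of index invertible in `k` admits a homomorphic section `s : P → E_f`, transporting `s` along
a transversal of `G ⧸ P` gives, for each `g`, one lift of `g` per coset; averaging their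
`A`-components over the cosets yields `x : G → A` with `dx = f` (Gaschütz's argument). When `P ≅ ⟨X ∣ R⟩`, such a section
exists as soon as every relator `r ∈ R` holds for the lifts `(0, x)` of the generators, and the
failure of `r` to hold is a `k`-linear function of `f` with values in `A`. Hence the common
kernel of these `|R|` linear maps on `Z²(G, A)` consists of coboundaries, and
`dim H²(G, A) ≤ |R| · dim A`.
A Sylow `2`-subgroup has odd index, which is invertible in characteristic `2`, and the
semidihedral group is presented with three relators.
-/

/-- The defining relations of the semi-dihedral group of order `2^(m+1)`:
generators `x = of 0`, `y = of 1`, with relations `x^2 = 1`, `y^(2^m) = 1`, and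
`x⁻¹ * y * x = y^(2^(m-1) - 1)`. -/
def semidihedralRels (m : ℕ) : Set (FreeGroup (Fin 2)) :=
  { FreeGroup.of 0 ^ 2,
    FreeGroup.of 1 ^ (2 ^ m),
    (FreeGroup.of 0)⁻¹ * FreeGroup.of 1 * FreeGroup.of 0 *
      (FreeGroup.of 1 ^ (2 ^ (m - 1) - 1))⁻¹ }

/-- The semi-dihedral group of order `2^(m+1)`, presented as
`⟨x, y ∣ x^2 = y^(2^m) = 1, x⁻¹ y x = y^(2^(m-1) - 1)⟩`. -/
def SemidihedralGroup (m : ℕ) : Type := PresentedGroup (semidihedralRels m)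

instance (m : ℕ) : Group (SemidihedralGroup m) :=
  inferInstanceAs (Group (PresentedGroup (semidihedralRels m)))

namespace groupCohomology

variable {k G : Type} [CommRing k] [Group G] {A : Rep k G}

@[simp]
lemma cocycles₂.coe_add (f f' : cocycles₂ A) : ⇑(f + f') = ⇑f + ⇑f' := rfl

@[simp]
lemma cocycles₂.coe_smul (c : k) (f : cocycles₂ A) : ⇑(c • f) = c • ⇑f := rfl

/-- The extension of `G` by `A` classified by `f`; the cocycle identity is associativity of its
multiplication. -/
def Cocycles₂Extension (_f : cocycles₂ A) : Type := A × G

namespace Cocycles₂Extension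

variable {f : cocycles₂ A}

noncomputable instance : Mul (Cocycles₂Extension f) :=
  ⟨fun u v => (u.1 + A.ρ u.2 v.1 + f (u.2, v.2), u.2 * v.2)⟩

-- `f` need not be normalized, hence the first component.
noncomputable instance : One (Cocycles₂Extension f) := ⟨(-f (1, 1), 1)⟩

noncomputable instance : Inv (Cocycles₂Extension f) :=
  ⟨fun u => (-f (1, 1) - f (u.2⁻¹, u.2) - A.ρ u.2⁻¹ u.1, u.2⁻¹)⟩

lemma fst_mul (u v : Cocycles₂Extension f) :
    (u * v).1 = u.1 + A.ρ u.2 v.1 + f (u.2, v.2) := rfl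

lemma snd_mul (u v : Cocycles₂Extension f) : (u * v).2 = u.2 * v.2 := rfl

lemma fst_one : (1 : Cocycles₂Extension f).1 = -f (1, 1) := rfl

lemma snd_one : (1 : Cocycles₂Extension f).2 = 1 := rfl

lemma fst_inv (u : Cocycles₂Extension f) :
    u⁻¹.1 = -f (1, 1) - f (u.2⁻¹, u.2) - A.ρ u.2⁻¹ u.1 := rfl

lemma snd_inv (u : Cocycles₂Extension f) : u⁻¹.2 = u.2⁻¹ := rfl

lemma ext {u v : Cocycles₂Extension f} (h₁ : u.1 = v.1) (h₂ : u.2 = v.2) : u = v :=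
  Prod.ext (α := A) h₁ h₂

noncomputable instance : Group (Cocycles₂Extension f) := by
  refine Group.ofLeftAxioms (fun u v w => ext ?_ (mul_assoc u.2 v.2 w.2))
    (fun u => ext ?_ (one_mul u.2)) (fun u => ext ?_ (inv_mul_cancel u.2))
  · have hf := (mem_cocycles₂_iff ⇑f).1 f.2 u.2 v.2 w.2
    simp only [fst_mul, snd_mul, map_add, map_mul, Module.End.mul_apply]
    rw [eq_sub_of_add_eq hf]
    abel
  · simp only [fst_mul, fst_one, snd_one, map_one, Module.End.one_apply]
    rw [cocycles₂_map_one_fst f u.2]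
    abel
  · simp only [fst_mul, fst_inv, snd_inv, fst_one]
    abel

noncomputable def proj : Cocycles₂Extension f →* G where
  toFun := Prod.snd
  map_one' := rfl
  map_mul' _ _ := rfl

variable {α : Type} (g : α → G)

variable (f) in
noncomputable def liftFreeGroup : FreeGroup α →* Cocycles₂Extension f :=
  FreeGroup.lift fun i => ((0 : A), g i)

lemma liftFreeGroup_of (i : α) :
    liftFreeGroup f g (FreeGroup.of i) = (((0 : A), g i) : Cocycles₂Extension f) :=
  FreeGroup.lift_apply_of

lemma proj_comp_liftFreeGroup : proj.comp (liftFreeGroup f g) = FreeGroup.lift g :=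
  FreeGroup.ext_hom _ _ fun i => by
    rw [MonoidHom.comp_apply, liftFreeGroup_of, FreeGroup.lift_apply_of]
    rfl

lemma snd_liftFreeGroup (w : FreeGroup α) : (liftFreeGroup f g w).2 = FreeGroup.lift g w :=
  DFunLike.congr_fun (proj_comp_liftFreeGroup g) w

lemma fst_liftFreeGroup_add (f' : cocycles₂ A) (w : FreeGroup α) :
    (liftFreeGroup (f + f') g w).1 = (liftFreeGroup f g w).1 + (liftFreeGroup f' g w).1 := by
  induction w using FreeGroup.induction_on with
  | C1 =>
    simp only [map_one, fst_one, cocycles₂.coe_add, Pi.add_apply]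
    abel
  | of i =>
    simp only [liftFreeGroup_of]
    abel
  | inv_of i _ =>
    rw [map_inv, map_inv, map_inv, fst_inv, fst_inv, fst_inv]
    simp only [liftFreeGroup_of, cocycles₂.coe_add, Pi.add_apply, map_zero]
    abel
  | mul w v ihw ihv =>
    simp only [map_mul, fst_mul, ihw, ihv, snd_liftFreeGroup, cocycles₂.coe_add, Pi.add_apply,
      map_add]
    abel

lemma fst_liftFreeGroup_smul (c : k) (w : FreeGroup α) :
    (liftFreeGroup (c • f) g w).1 = c • (liftFreeGroup f g w).1 := by
  induction w using FreeGroup.induction_on with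
  | C1 =>
    simp only [map_one, fst_one, cocycles₂.coe_smul, Pi.smul_apply, smul_neg]
  | of i =>
    simp only [liftFreeGroup_of, smul_zero]
  | inv_of i _ =>
    rw [map_inv, map_inv, fst_inv, fst_inv]
    simp only [liftFreeGroup_of, cocycles₂.coe_smul, Pi.smul_apply, map_zero, smul_sub,
      smul_neg, smul_zero]
  | mul w v ihw ihv =>
    simp only [map_mul, fst_mul, ihw, ihv, snd_liftFreeGroup, cocycles₂.coe_smul, Pi.smul_apply,
      map_smul, smul_add]

end Cocycles₂Extension

open Cocycles₂Extension

variable {α : Type} (g : α → G)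

/-- `relatorValue g r f = 0` says that the relator `r` holds in `Cocycles₂Extension f` between
the lifts `(0, g i)` of the `g i`, given that it holds between the `g i` in `G`. -/
noncomputable def relatorValue (r : FreeGroup α) : cocycles₂ A →ₗ[k] A where
  toFun f := (liftFreeGroup f g r).1 + f (1, 1)
  map_add' f f' := by
    simp only [fst_liftFreeGroup_add, cocycles₂.coe_add, Pi.add_apply]
    abel
  map_smul' c f := by
    simp only [fst_liftFreeGroup_smul, cocycles₂.coe_smul, Pi.smul_apply, RingHom.id_apply,
      smul_add]

lemma liftFreeGroup_eq_one {f : cocycles₂ A} {r : FreeGroup α} (hr : FreeGroup.lift g r = 1)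
    (hf : relatorValue g r f = 0) : liftFreeGroup f g r = 1 :=
  ext (eq_neg_of_add_eq_zero_left hf) ((snd_liftFreeGroup g r).trans hr)

theorem mem_coboundaries₂_of_lifts {X : Type} [MulAction G X] [Finite X]
    (hX : IsUnit (Nat.card X : k)) {f : cocycles₂ A} (t : G → X → Cocycles₂Extension f)
    (ht : ∀ g x, (t g x).2 = g) (ht_mul : ∀ g h x, t (g * h) x = t g (h • x) * t h x) :
    ⇑f ∈ coboundaries₂ A := by
  let _ := Fintype.ofFinite X
  obtain ⟨u, hu⟩ := hX
  let σ : G → A := fun g => ∑ x, (t g x).1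
  have hσ : ∀ g h, σ (g * h) = σ g + A.ρ g (σ h) + (u : k) • f (g, h) := by
    intro g h
    have hfst : ∀ x, (t (g * h) x).1 = (t g (h • x)).1 + A.ρ g (t h x).1 + f (g, h) := by
      intro x
      rw [ht_mul, fst_mul, ht, ht]
    simp only [σ]
    rw [Finset.sum_congr rfl fun x _ => hfst x, Finset.sum_add_distrib, Finset.sum_add_distrib,
      map_sum, Finset.sum_const, Finset.card_univ, ← Nat.card_eq_fintype_card,
      ← Nat.cast_smul_eq_nsmul k, hu]
    congr 2
    exact Fintype.sum_equiv (MulAction.toPerm h) _ _ fun x => rfl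
  refine ⟨fun g => u⁻¹ • -σ g, funext fun ⟨g, h⟩ => ?_⟩
  change A.ρ g (u⁻¹ • -σ h) - u⁻¹ • -σ (g * h) + u⁻¹ • -σ g = f (g, h)
  rw [hσ, Units.smul_def, (A.ρ g).map_smul, Units.smul_def, Units.smul_def]
  simp only [map_neg, smul_neg, smul_add, smul_smul, Units.inv_mul, one_smul]
  abel

theorem exists_lifts_of_splits {P : Subgroup G} {f : cocycles₂ A}
    (s : P →* Cocycles₂Extension f) (hs : proj.comp s = P.subtype) :
    ∃ t : G → G ⧸ P → Cocycles₂Extension f,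
      (∀ g c, (t g c).2 = g) ∧ ∀ g h c, t (g * h) c = t g (h • c) * t h c := by
  have hs' : ∀ p, (s p).2 = p := DFunLike.congr_fun hs
  let τ : G ⧸ P → G := Quotient.out
  have hτ : ∀ g c, (τ (g • c))⁻¹ * (g * τ c) ∈ P := fun g c => by
    rw [← QuotientGroup.eq, QuotientGroup.out_eq', ← smul_eq_mul]
    exact (MulAction.Quotient.coe_smul_out (H := P) g c).symm
  let ρ : G → G ⧸ P → P := fun g c => ⟨_, hτ g c⟩
  have hρ : ∀ g h c, ρ g (h • c) * ρ h c = ρ (g * h) c := fun g h c => by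
    ext
    simp only [ρ, Subgroup.coe_mul, mul_smul]
    group
  let σ : G → Cocycles₂Extension f := fun q => ((0 : A), q)
  have hσ : ∀ q, (σ q).2 = q := fun _ => rfl
  refine ⟨fun g c => σ (τ (g • c)) * s (ρ g c) * (σ (τ c))⁻¹, fun g c => ?_,
    fun g h c => ?_⟩
  · simp only [snd_mul, snd_inv, hs', hσ, ρ]
    group
  · simp only [← hρ, map_mul, mul_smul]
    group

theorem mem_coboundaries₂_of_splits (P : Subgroup G) [P.FiniteIndex] (hP : IsUnit (P.index : k))
    {f : cocycles₂ A} (s : P →* Cocycles₂Extension f) (hs : proj.comp s = P.subtype) :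
    ⇑f ∈ coboundaries₂ A :=
  have ⟨t, ht, ht_mul⟩ := exists_lifts_of_splits s hs
  mem_coboundaries₂_of_lifts hP t ht ht_mul

theorem mem_coboundaries₂_of_relatorValue_eq_zero (P : Subgroup G) [P.FiniteIndex]
    (hP : IsUnit (P.index : k)) {rels : Set (FreeGroup α)} (e : P ≃* PresentedGroup rels)
    {f : cocycles₂ A}
    (hf : ∀ r ∈ rels, relatorValue (fun i => (e.symm (.of i) : G)) r f = 0) :
    ⇑f ∈ coboundaries₂ A := by
  set g : α → G := fun i => (e.symm (.of i) : G)
  have hg : FreeGroup.lift g = (P.subtype.comp e.symm.toMonoidHom).comp (PresentedGroup.mk rels) :=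
    FreeGroup.ext_hom _ _ fun i => FreeGroup.lift_apply_of
  have hrels : ∀ r ∈ rels, liftFreeGroup f g r = 1 := fun r hr =>
    liftFreeGroup_eq_one g (by rw [hg, MonoidHom.comp_apply, PresentedGroup.one_of_mem hr,
      map_one]) (hf r hr)
  have hψ : proj.comp (PresentedGroup.toGroup hrels) = P.subtype.comp e.symm.toMonoidHom :=
    PresentedGroup.ext fun i => congrArg proj (PresentedGroup.toGroup.of hrels)
  refine mem_coboundaries₂_of_splits P hP ((PresentedGroup.toGroup hrels).comp e.toMonoidHom) ?_
  rw [← MonoidHom.comp_assoc, hψ]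
  ext p
  simp

end groupCohomology

theorem LinearMap.finrank_le_of_surjective_of_ker_le {K V W H : Type*} [Field K]
    [AddCommGroup V] [Module K V] [AddCommGroup W] [Module K W] [AddCommGroup H] [Module K H]
    [FiniteDimensional K W] {π : V →ₗ[K] H} (hπ : Function.Surjective π) (Φ : V →ₗ[K] W)
    (h : Φ.ker ≤ π.ker) : Module.finrank K H ≤ Module.finrank K W := by
  have : FiniteDimensional K (V ⧸ Φ.ker) := Φ.quotKerEquivRange.symm.finiteDimensional
  have hsurj : Function.Surjective (Φ.ker.liftQ π h) := fun y =>
    have ⟨x, hx⟩ := hπ y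
    ⟨Φ.ker.mkQ x, hx⟩
  calc Module.finrank K H ≤ Module.finrank K (V ⧸ Φ.ker) :=
        LinearMap.finrank_le_finrank_of_surjective hsurj
    _ = Module.finrank K Φ.range := Φ.quotKerEquivRange.finrank_eq
    _ ≤ Module.finrank K W := Submodule.finrank_le _

open groupCohomology in
theorem finrank_H2_le_of_presentedGroup {k G α : Type} [Field k] [Group G] (A : Rep k G)
    [FiniteDimensional k A.V] (P : Subgroup G) [P.FiniteIndex] (hP : IsUnit (P.index : k))
    {rels : Set (FreeGroup α)} [Finite rels] (e : P ≃* PresentedGroup rels) :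
    Module.finrank k (H2 A) ≤ Nat.card rels * Module.finrank k A.V := by
  let _ := Fintype.ofFinite rels
  let Φ : cocycles₂ A →ₗ[k] rels → A :=
    LinearMap.pi fun r => relatorValue (fun i => (e.symm (.of i) : G)) r
  have hker : Φ.ker ≤ (H2π A).hom.ker := fun f hf =>
    (H2π_eq_zero_iff f).2 <| mem_coboundaries₂_of_relatorValue_eq_zero P hP e fun r hr =>
      congrFun (LinearMap.mem_ker.1 hf) ⟨r, hr⟩
  calc Module.finrank k (H2 A) ≤ Module.finrank k (rels → A) :=
        LinearMap.finrank_le_of_surjective_of_ker_le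
          ((ModuleCat.epi_iff_surjective (H2π A)).1 inferInstance) Φ hker
    _ = Nat.card rels * Module.finrank k A.V := by
      rw [Module.finrank_pi_fintype, Finset.sum_const, Finset.card_univ, smul_eq_mul,
        Nat.card_eq_fintype_card]

theorem Sylow.isUnit_index_cast {p : ℕ} [Fact p.Prime] {K : Type*} [Field K] [CharP K p]
    {G : Type*} [Group G] (P : Sylow p G) [(P : Subgroup G).FiniteIndex] :
    IsUnit ((P : Subgroup G).index : K) :=
  isUnit_iff_ne_zero.2 fun h => P.not_dvd_index ((CharP.cast_eq_zero_iff K p _).1 h)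

theorem finite_semidihedralRels (m : ℕ) : (semidihedralRels m).Finite :=
  ((Set.finite_singleton _).insert _).insert _

theorem ncard_semidihedralRels_le (m : ℕ) : (semidihedralRels m).ncard ≤ 3 :=
  calc (semidihedralRels m).ncard ≤ _ + 1 := Set.ncard_insert_le _ _
    _ ≤ _ + 1 + 1 := by gcongr; exact Set.ncard_insert_le _ _
    _ = 3 := by rw [Set.ncard_singleton]

theorem finrank_groupCohomology_two_le_of_semidihedral_sylow_general
    (F : Type) [Field F] [CharP F 2]
    (Q : Type) [Group Q] [Fintype Q]
    (m : ℕ) (P : Sylow 2 Q)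
    (hP : Nonempty (↥(P : Subgroup Q) ≃* SemidihedralGroup m))
    (M : Rep F Q) [FiniteDimensional F M.V] :
    Module.finrank F (groupCohomology M 2) ≤ 3 * Module.finrank F M.V := by
  obtain ⟨e⟩ := hP
  have := (finite_semidihedralRels m).to_subtype
  calc Module.finrank F (groupCohomology M 2)
      ≤ Nat.card (semidihedralRels m) * Module.finrank F M.V :=
        finrank_H2_le_of_presentedGroup M P P.isUnit_index_cast e
    _ ≤ 3 * Module.finrank F M.V := Nat.mul_le_mul_right _ (ncard_semidihedralRels_le m)

/-- Let `F` be a field of characteristic `2`, let `m ≥ 3`, and let `Q` be a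
finite group whose Sylow `2`-subgroup is isomorphic to the semi-dihedral group of order
`2^(m+1)`.  Then for every finite-dimensional `F`-linear representation `M` of `Q`,
`dim_F H^2(Q, M) ≤ 3 · dim_F M`. -/
theorem finrank_groupCohomology_two_le_of_semidihedral_sylow
    (F : Type) [Field F] [CharP F 2]
    (Q : Type) [Group Q] [Fintype Q]
    (m : ℕ) (hm : 3 ≤ m) (P : Sylow 2 Q)
    (hP : Nonempty (↥(P : Subgroup Q) ≃* SemidihedralGroup m))
    (M : Rep F Q) [FiniteDimensional F M.V] :
    Module.finrank F (groupCohomology M 2) ≤ 3 * Module.finrank F M.V :=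
  finrank_groupCohomology_two_le_of_semidihedral_sylow_general F Q m P hP M
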